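/- Let n_max ∈ ℕ, let 1 ≤ N ≤ n_max, take the uniform phases θ_k = 2πk/N (k = 0,…,N−1), and let x_1 < … < x_{M+1} be arbitrary bin edges with bins I_i = [x_i, x_{i+1}). For α ∈ ℝ and β ∈ ℂ, define v_β ∈ ℂ^{n_max+1} by (v_β)_0 = α, (v_β)_N = β, and (v_β)_j = 0 otherwise, and set ρ_β = v_β v_β† (outer product). Then Tr(ρ_β · Π(I_i, θ_k)) = Tr(ρ_{β̄} · Π(I_i, θ_k)) for all i ∈ {1,…,M} and k ∈ {0,…,N−1}, where β̄ is the complex conjugate of β. In particular, if α ≠ 0 and Im β ≠ 0, then ρ_β ≠ ρ_{β̄} and the family {Π(I_i, θ_k)} does not span M_{n_max+1}(ℂ). -/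

import Mathlib

/-- The `n`-th physicists' Hermite polynomial (as a function),
`H_n(x) = (−1)^n e^{x²} (d/dx)^n e^{−x²}`. -/
noncomputable def physHermite (n : ℕ) (x : ℝ) : ℝ :=
  (-1 : ℝ) ^ n * Real.exp (x ^ 2) * iteratedDeriv n (fun y => Real.exp (-y ^ 2)) x

/-- The normalized Hermite overlap integral
`(2^{m+n} m! n! π)^{−1/2} ∫_u^v H_m(x) H_n(x) e^{−x²} dx`. -/
noncomputable def hermOverlap (m n : ℕ) (u v : ℝ) : ℝ :=
  (Real.sqrt (2 ^ (m + n) * m.factorial * n.factorial * Real.pi))⁻¹ *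
    ∫ x in u..v, physHermite m x * physHermite n x * Real.exp (-x ^ 2)

/-- The truncated homodyne POVM matrix `Π([u,v), θ)` for photon-number cutoff `nmax`:
`Π(I,θ)_{m,n} = e^{i(m−n)θ} (2^{m+n} m! n! π)^{−1/2} ∫_u^v H_m H_n e^{−x²}`. -/
noncomputable def homPOVM (nmax : ℕ) (u v θ : ℝ) :
    Matrix (Fin (nmax + 1)) (Fin (nmax + 1)) ℂ :=
  Matrix.of fun m n =>
    Complex.exp (Complex.I * (((m : ℕ) : ℂ) - ((n : ℕ) : ℂ)) * (θ : ℂ)) *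
      (hermOverlap m n u v : ℂ)


/-- The vector `v ∈ ℂ^{n_max+1}` with `v_0 = α`, `v_t = β`, and all other entries `0`. -/
noncomputable def twoLevelVec (nmax t : ℕ) (α : ℝ) (β : ℂ) : Fin (nmax + 1) → ℂ :=
  fun j => if (j : ℕ) = 0 then (α : ℂ) else if (j : ℕ) = t then β else 0

/-- The rank-one outer product `ρ = v v†` built from `twoLevelVec`. -/
noncomputable def twoLevelOuter (nmax t : ℕ) (α : ℝ) (β : ℂ) :
    Matrix (Fin (nmax + 1)) (Fin (nmax + 1)) ℂ :=
  Matrix.vecMulVec (twoLevelVec nmax t α β) (fun q => starRingEnd ℂ (twoLevelVec nmax t α β q))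


-- aux lemmas
lemma hermOverlap_symm (m n : ℕ) (u v : ℝ) : hermOverlap m n u v = hermOverlap n m u v := by
  unfold hermOverlap
  rw [add_comm m n]
  congr 2
  · ring_nf
  · funext x; ring

lemma sum_twoLevel {d : ℕ} (i0 iN : Fin d) (h : i0 ≠ iN) (a b : ℂ) (g : Fin d → ℂ) :
    ∑ p, (if p = i0 then a else if p = iN then b else 0) * g p = a * g i0 + b * g iN := by
  have key : ∀ p : Fin d, (if p = i0 then a else if p = iN then b else 0) * g p
      = (if p = i0 then a * g i0 else 0) + (if p = iN then b * g iN else 0) := by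
    intro p
    by_cases h0 : p = i0
    · subst h0; simp [h]
    · by_cases hN : p = iN
      · subst hN; simp [h0]
      · simp [h0, hN]
  simp_rw [key, Finset.sum_add_distrib, Finset.sum_ite_eq', Finset.mem_univ, if_true]

lemma trace_outer_mul (nmax t : ℕ) (ht1 : 1 ≤ t) (ht2 : t ≤ nmax) (α : ℝ) (β : ℂ)
    (P : Matrix (Fin (nmax + 1)) (Fin (nmax + 1)) ℂ) :
    (twoLevelOuter nmax t α β * P).trace =
      (α : ℂ) * ((α : ℂ) * P ⟨0, by omega⟩ ⟨0, by omega⟩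
        + (starRingEnd ℂ β) * P ⟨t, by omega⟩ ⟨0, by omega⟩)
      + β * ((α : ℂ) * P ⟨0, by omega⟩ ⟨t, by omega⟩
        + (starRingEnd ℂ β) * P ⟨t, by omega⟩ ⟨t, by omega⟩) := by
  set i0 : Fin (nmax + 1) := ⟨0, by omega⟩
  set iN : Fin (nmax + 1) := ⟨t, by omega⟩
  have hne : i0 ≠ iN := by
    intro h
    have := congrArg Fin.val h
    simp only [i0, iN] at this
    omega
  have hv : ∀ p : Fin (nmax + 1), twoLevelVec nmax t α β p
      = if p = i0 then (α : ℂ) else if p = iN then β else 0 := by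
    intro p; simp [twoLevelVec, Fin.ext_iff, i0, iN, -Fin.val_eq_zero_iff]
  have hvc : ∀ p : Fin (nmax + 1),
      starRingEnd ℂ (if p = i0 then (α : ℂ) else if p = iN then β else 0)
      = if p = i0 then (α : ℂ) else if p = iN then starRingEnd ℂ β else 0 := by
    intro p; rcases eq_or_ne p i0 with h | h <;> rcases eq_or_ne p iN with h2 | h2 <;>
      simp [h, h2, Ne.symm hne, Complex.conj_ofReal]
  have : (twoLevelOuter nmax t α β * P).trace
      = ∑ p, (twoLevelVec nmax t α β p) *
          ∑ q, (starRingEnd ℂ (twoLevelVec nmax t α β q)) * P q p := by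
    simp [Matrix.trace, Matrix.mul_apply, twoLevelOuter, Matrix.vecMulVec_apply,
      Finset.mul_sum, mul_assoc]
  rw [this]
  simp_rw [hv, hvc]
  rw [sum_twoLevel i0 iN hne]
  congr 1
  · exact congrArg _ (sum_twoLevel i0 iN hne _ _ _)
  · exact congrArg _ (sum_twoLevel i0 iN hne _ _ _)

lemma exp_two_pi_k (N k : ℕ) (hN : 1 ≤ N) (c : ℂ) (hc : c = (N : ℂ) ∨ c = -(N : ℂ)) :
    Complex.exp (Complex.I * c * ((2 * Real.pi * (k : ℕ) / N : ℝ) : ℂ)) = 1 := by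
  have hNC : (N : ℂ) ≠ 0 := Nat.cast_ne_zero.mpr (by omega)
  rcases hc with rfl | rfl
  · have harg : Complex.I * (N : ℂ) * ((2 * Real.pi * (k : ℕ) / N : ℝ) : ℂ)
        = ((k : ℤ) : ℂ) * (2 * Real.pi * Complex.I) := by
      push_cast
      field_simp
    rw [harg, Complex.exp_int_mul_two_pi_mul_I]
  · have harg : Complex.I * (-(N : ℂ)) * ((2 * Real.pi * (k : ℕ) / N : ℝ) : ℂ)
        = ((-(k : ℤ) : ℤ) : ℂ) * (2 * Real.pi * Complex.I) := by
      push_cast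
      field_simp
    rw [harg, Complex.exp_int_mul_two_pi_mul_I]

lemma outer_entry (nmax t : ℕ) (ht1 : 1 ≤ t) (ht2 : t ≤ nmax) (α : ℝ) (β : ℂ) :
    twoLevelOuter nmax t α β ⟨t, by omega⟩ ⟨0, by omega⟩ = β * (α : ℂ) := by
  have h1 : ¬ (t = 0) := by omega
  simp [twoLevelOuter, Matrix.vecMulVec_apply, twoLevelVec, h1, Complex.conj_ofReal]


/-- For `1 ≤ N ≤ n_max`, uniform phases `θ_k = 2πk/N` and arbitrary bins
`I_i = [x_i, x_{i+1})`, the states `ρ_β = v_β v_β†` (with `(v_β)_0 = α`, `(v_β)_N = β`) and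
`ρ_{β̄}` give identical outcome probabilities `Tr(ρ Π(I_i, θ_k))`.  In particular, if
`α ≠ 0` and `Im β ≠ 0` then `ρ_β ≠ ρ_{β̄}` and the POVM family does not span
`M_{n_max+1}(ℂ)`. -/
theorem homPOVM_not_complete_of_N_le_nmax (nmax N M : ℕ)
    (hN1 : 1 ≤ N) (hN2 : N ≤ nmax) (x : Fin (M + 1) → ℝ) (hx : StrictMono x)
    (α : ℝ) (β : ℂ) :
    (∀ (i : Fin M) (k : Fin N),
      (twoLevelOuter nmax N α β *
          homPOVM nmax (x i.castSucc) (x i.succ) (2 * Real.pi * (k : ℕ) / N)).trace =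
      (twoLevelOuter nmax N α (starRingEnd ℂ β) *
          homPOVM nmax (x i.castSucc) (x i.succ) (2 * Real.pi * (k : ℕ) / N)).trace) ∧
    (α ≠ 0 → β.im ≠ 0 →
      twoLevelOuter nmax N α β ≠ twoLevelOuter nmax N α (starRingEnd ℂ β) ∧
      Submodule.span ℂ
        (Set.range fun p : Fin M × Fin N =>
          homPOVM nmax (x p.1.castSucc) (x p.1.succ)
            (2 * Real.pi * (p.2 : ℕ) / N)) ≠ ⊤) := by
  have h0lt : 0 < nmax + 1 := by omega
  have hNlt : N < nmax + 1 := by omega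
  set i0 : Fin (nmax + 1) := ⟨0, h0lt⟩ with hi0
  set iN : Fin (nmax + 1) := ⟨N, hNlt⟩ with hiN
  -- the key trace identity
  have key : ∀ (i : Fin M) (k : Fin N),
      (twoLevelOuter nmax N α β *
          homPOVM nmax (x i.castSucc) (x i.succ) (2 * Real.pi * (k : ℕ) / N)).trace =
      (twoLevelOuter nmax N α (starRingEnd ℂ β) *
          homPOVM nmax (x i.castSucc) (x i.succ) (2 * Real.pi * (k : ℕ) / N)).trace := by
    intro i k
    set P := homPOVM nmax (x i.castSucc) (x i.succ) (2 * Real.pi * (k : ℕ) / N) with hP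
    rw [trace_outer_mul nmax N hN1 hN2, trace_outer_mul nmax N hN1 hN2]
    have hPsymm : P ⟨N, by omega⟩ ⟨0, by omega⟩ = P ⟨0, by omega⟩ ⟨N, by omega⟩ := by
      show homPOVM _ _ _ _ ⟨N, hNlt⟩ ⟨0, h0lt⟩ = homPOVM _ _ _ _ ⟨0, h0lt⟩ ⟨N, hNlt⟩
      simp only [homPOVM, Matrix.of_apply]
      rw [hermOverlap_symm]
      congr 1
      rw [show (((⟨N, hNlt⟩ : Fin (nmax+1)) : ℕ) : ℂ) - (((⟨0, h0lt⟩ : Fin (nmax+1)) : ℕ) : ℂ)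
            = (N : ℂ) by push_cast; ring,
          show (((⟨0, h0lt⟩ : Fin (nmax+1)) : ℕ) : ℂ) - (((⟨N, hNlt⟩ : Fin (nmax+1)) : ℕ) : ℂ)
            = -(N : ℂ) by push_cast; ring]
      rw [exp_two_pi_k N k hN1 _ (Or.inl rfl), exp_two_pi_k N k hN1 _ (Or.inr rfl)]
    rw [hPsymm, Complex.conj_conj]
    ring
  refine ⟨key, fun hα hβ => ?_⟩
  -- the two states differ
  have hne : twoLevelOuter nmax N α β ≠ twoLevelOuter nmax N α (starRingEnd ℂ β) := by
    intro h
    have h2 := congrFun (congrFun h iN) i0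
    rw [show (iN : Fin (nmax+1)) = ⟨N, by omega⟩ from rfl,
        show (i0 : Fin (nmax+1)) = ⟨0, by omega⟩ from rfl,
        outer_entry nmax N hN1 hN2 α β,
        outer_entry nmax N hN1 hN2 α (starRingEnd ℂ β)] at h2
    have hαC : (α : ℂ) ≠ 0 := Complex.ofReal_ne_zero.mpr hα
    have heq : β = starRingEnd ℂ β := mul_right_cancel₀ hαC h2
    have him := congrArg Complex.im heq
    rw [Complex.conj_im] at him
    exact hβ (by linarith)
  refine ⟨hne, fun hspan => ?_⟩
  -- completeness would force the two states to give the same matrix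
  set D : Matrix (Fin (nmax + 1)) (Fin (nmax + 1)) ℂ :=
    twoLevelOuter nmax N α β - twoLevelOuter nmax N α (starRingEnd ℂ β) with hD
  let φ : Matrix (Fin (nmax + 1)) (Fin (nmax + 1)) ℂ →ₗ[ℂ] ℂ :=
    (Matrix.traceLinearMap (Fin (nmax + 1)) ℂ ℂ).comp (LinearMap.mulLeft ℂ D)
  have hgen : ∀ p : Fin M × Fin N,
      φ (homPOVM nmax (x p.1.castSucc) (x p.1.succ) (2 * Real.pi * (p.2 : ℕ) / N)) = 0 := by
    intro p
    have := key p.1 p.2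
    simp only [φ, LinearMap.comp_apply, LinearMap.mulLeft_apply, Matrix.traceLinearMap_apply,
      hD, Matrix.sub_mul, Matrix.trace_sub, this, sub_self]
  have hle : Submodule.span ℂ (Set.range fun p : Fin M × Fin N =>
      homPOVM nmax (x p.1.castSucc) (x p.1.succ) (2 * Real.pi * (p.2 : ℕ) / N))
      ≤ LinearMap.ker φ := by
    rw [Submodule.span_le]
    rintro _ ⟨p, rfl⟩
    exact hgen p
  rw [hspan, top_le_iff] at hle
  have hφ0 : φ (Matrix.single i0 iN (1 : ℂ)) = 0 := by
    have : Matrix.single i0 iN (1 : ℂ) ∈ LinearMap.ker φ := by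
      rw [hle]; trivial
    exact this
  have htr : (D * Matrix.single i0 iN (1 : ℂ)).trace = D iN i0 := by
    simp [Matrix.trace, Matrix.diag, Matrix.mul_apply, Matrix.single,
      mul_ite, mul_one, mul_zero, ite_and, Finset.sum_ite_eq, Finset.mem_univ]
  have hD0 : D iN i0 ≠ 0 := by
    rw [hD, Matrix.sub_apply,
        show (iN : Fin (nmax+1)) = ⟨N, by omega⟩ from rfl,
        show (i0 : Fin (nmax+1)) = ⟨0, by omega⟩ from rfl,
        outer_entry nmax N hN1 hN2 α β,
        outer_entry nmax N hN1 hN2 α (starRingEnd ℂ β)]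
    intro h
    have hαC : (α : ℂ) ≠ 0 := Complex.ofReal_ne_zero.mpr hα
    rw [sub_eq_zero] at h
    have heq : β = starRingEnd ℂ β := mul_right_cancel₀ hαC h
    have him := congrArg Complex.im heq
    rw [Complex.conj_im] at him
    exact hβ (by linarith)
  apply hD0
  rw [← htr]
  simpa only [φ, LinearMap.comp_apply, LinearMap.mulLeft_apply,
    Matrix.traceLinearMap_apply] using hφ0
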